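/- Let s, σ, Δt > 0, S = S(s, σ, Δt), and a > 0. Then E[|S − (s + a)|] > E[|S − (s − a)|]. -/

import Mathlib

open MeasureTheory ProbabilityTheory Real Filter
open scoped NNReal ENNReal

noncomputable section

/-- The standard normal cumulative distribution function `Φ`. -/
def stdNormalCDF (x : ℝ) : ℝ := ((gaussianReal 0 1) (Set.Iic x)).toReal

/-- The lognormal asset price `S(s, σ, Δt) = s · exp(−σ²Δt/2 + σ√Δt · Z)` as a function of the
standard normal noise `z`; expectations `E[f(S)]` are integrals of `z ↦ f (lnPrice s σ Δt z)`
against the standard Gaussian measure `gaussianReal 0 1`. -/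
def lnPrice (s σ Δt z : ℝ) : ℝ := s * Real.exp (-σ ^ 2 * Δt / 2 + σ * Real.sqrt Δt * z)

/-- Integration against the standard Gaussian as a Lebesgue integral with density. -/
lemma gauss_int_aux (f : ℝ → ℝ) :
    ∫ w, f w ∂(gaussianReal 0 1) = ∫ w, gaussianPDFReal 0 1 w * f w := by
  rw [gaussianReal_of_var_ne_zero 0 one_ne_zero]
  have : (gaussianPDF 0 1) = fun x => ((Real.toNNReal (gaussianPDFReal 0 1 x) : ℝ≥0) : ℝ≥0∞) := by
    funext x; simp [gaussianPDF, ENNReal.ofReal]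
  rw [this, integral_withDensity_eq_integral_smul
    (by exact (measurable_gaussianPDFReal 0 1).real_toNNReal)]
  congr 1; funext x
  rw [NNReal.smul_def, Real.coe_toNNReal _ (gaussianPDFReal_nonneg 0 1 x), smul_eq_mul]

lemma pdf_shift_aux (τ w : ℝ) :
    gaussianPDFReal 0 1 w * Real.exp (τ * w - τ^2/2) = gaussianPDFReal τ 1 w := by
  simp only [gaussianPDFReal, NNReal.coe_one, mul_one, sub_zero]
  rw [mul_assoc, ← Real.exp_add]
  ring_nf

lemma pdf_refl_aux (τ w : ℝ) : gaussianPDFReal 0 1 (τ - w) = gaussianPDFReal τ 1 w := by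
  simp only [gaussianPDFReal, NNReal.coe_one, mul_one, sub_zero]
  ring_nf

lemma int_exp_aux (τ : ℝ) :
    Integrable (fun w => gaussianPDFReal 0 1 w * Real.exp (τ * w - τ^2/2)) := by
  simp only [pdf_shift_aux]
  exact integrable_gaussianPDFReal τ 1

lemma integ_aux (τ : ℝ) (g : ℝ → ℝ) (hg : Measurable g) (C : ℝ)
    (hb : ∀ x, |g x| ≤ C * (1 + Real.exp (τ * x - τ^2/2))) :
    Integrable (fun w => gaussianPDFReal 0 1 w * g w) := by
  have hint : Integrable (fun w => C * (gaussianPDFReal 0 1 w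
      + gaussianPDFReal 0 1 w * Real.exp (τ * w - τ^2/2))) :=
    ((integrable_gaussianPDFReal 0 1).add (int_exp_aux τ)).const_mul C
  refine hint.mono (((measurable_gaussianPDFReal 0 1).mul hg).aestronglyMeasurable) ?_
  filter_upwards with x
  have h1 : (0:ℝ) ≤ gaussianPDFReal 0 1 x := gaussianPDFReal_nonneg 0 1 x
  have h2 := hb x
  have h3 : |gaussianPDFReal 0 1 x * g x| = gaussianPDFReal 0 1 x * |g x| := by
    rw [abs_mul, abs_of_nonneg h1]
  rw [Real.norm_eq_abs, Real.norm_eq_abs, h3]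
  calc gaussianPDFReal 0 1 x * |g x|
      ≤ gaussianPDFReal 0 1 x * (C * (1 + Real.exp (τ * x - τ^2/2))) :=
        mul_le_mul_of_nonneg_left h2 h1
    _ ≤ |C * (gaussianPDFReal 0 1 x + gaussianPDFReal 0 1 x * Real.exp (τ * x - τ^2/2))| := by
        refine le_trans (le_of_eq (by ring)) (le_abs_self _)

lemma mean_eq_aux (s τ : ℝ) :
    ∫ w, gaussianPDFReal 0 1 w * (s * Real.exp (τ * w - τ^2/2)) = s := by
  have : (fun w => gaussianPDFReal 0 1 w * (s * Real.exp (τ * w - τ^2/2)))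
      = fun w => s * gaussianPDFReal τ 1 w := by
    funext w; rw [← pdf_shift_aux τ w]; ring
  rw [this, integral_const_mul, integral_gaussianPDFReal_eq_one τ one_ne_zero, mul_one]

lemma bnd_aux (s K τ : ℝ) (hs : 0 < s) (x : ℝ) :
    |s * Real.exp (τ * x - τ^2/2) - K| ≤ (s + |K|) * (1 + Real.exp (τ * x - τ^2/2)) := by
  have he : 0 < Real.exp (τ * x - τ^2/2) := Real.exp_pos _
  have h1 : |s * Real.exp (τ * x - τ^2/2) - K|
      ≤ |s * Real.exp (τ * x - τ^2/2)| + |K| := abs_sub _ _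
  have h2 : |s * Real.exp (τ * x - τ^2/2)| = s * Real.exp (τ * x - τ^2/2) :=
    abs_of_nonneg (by positivity)
  have h3 : (0:ℝ) ≤ |K| := abs_nonneg K
  nlinarith

lemma integ_abs_aux (s K τ : ℝ) (hs : 0 < s) :
    Integrable (fun w => gaussianPDFReal 0 1 w * |s * Real.exp (τ * w - τ^2/2) - K|) := by
  refine integ_aux τ _ (by fun_prop) (s + |K|) (fun x => ?_)
  rw [abs_abs]
  exact bnd_aux s K τ hs x

lemma integ_maxc_aux (s K τ : ℝ) (hs : 0 < s) :
    Integrable (fun w => gaussianPDFReal 0 1 w * max (s * Real.exp (τ * w - τ^2/2) - K) 0) := by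
  refine integ_aux τ _ (by fun_prop) (s + |K|) (fun x => ?_)
  rw [abs_of_nonneg (le_max_right _ _)]
  exact le_trans (max_le (le_abs_self _) (abs_nonneg _)) (bnd_aux s K τ hs x)

lemma integ_maxp_aux (s K τ : ℝ) (hs : 0 < s) :
    Integrable (fun w => gaussianPDFReal 0 1 w * max (K - s * Real.exp (τ * w - τ^2/2)) 0) := by
  refine integ_aux τ _ (by fun_prop) (s + |K|) (fun x => ?_)
  rw [abs_of_nonneg (le_max_right _ _)]
  refine le_trans (max_le ?_ (abs_nonneg _)) (bnd_aux s K τ hs x)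
  rw [abs_sub_comm]
  exact le_abs_self _

/-- Lognormal symmetry: the call at strike `s+a` equals `((s+a)/s)` times the put at
strike `s²/(s+a)`. -/
lemma call_eq_put_aux (s a τ : ℝ) (hs : 0 < s) (ha : 0 < a) :
    (∫ w, gaussianPDFReal 0 1 w * max (s * Real.exp (τ * w - τ^2/2) - (s+a)) 0)
    = ((s+a)/s) *
      ∫ w, gaussianPDFReal 0 1 w * max (s^2/(s+a) - s * Real.exp (τ * w - τ^2/2)) 0 := by
  rw [← integral_sub_left_eq_self
    (fun w => gaussianPDFReal 0 1 w * max (s * Real.exp (τ * w - τ^2/2) - (s+a)) 0)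
    (volume : Measure ℝ) τ, ← integral_const_mul]
  congr 1; funext w
  show gaussianPDFReal 0 1 (τ - w) * max (s * Real.exp (τ * (τ - w) - τ^2/2) - (s+a)) 0 = _
  set u := Real.exp (τ * w - τ^2/2) with hu_def
  have hu : 0 < u := Real.exp_pos _
  have h1 : gaussianPDFReal 0 1 (τ - w) = gaussianPDFReal 0 1 w * u := by
    rw [pdf_refl_aux, ← pdf_shift_aux]
  have h2 : Real.exp (τ * (τ - w) - τ^2/2) = u⁻¹ := by
    rw [← Real.exp_neg]; congr 1; ring
  rw [h1, h2]
  have key : u * max (s * u⁻¹ - (s+a)) 0 = (s+a)/s * max (s^2/(s+a) - s * u) 0 := by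
    rw [mul_max_of_nonneg _ _ hu.le, mul_zero,
      mul_max_of_nonneg _ _ (by positivity : (0:ℝ) ≤ (s+a)/s), mul_zero]
    congr 1
    field_simp
  rw [mul_assoc, key]
  ring

lemma put_pos_aux (s K τ : ℝ) (hs : 0 < s) (hK : 0 < K) (hτ : 0 < τ) :
    0 < ∫ w, gaussianPDFReal 0 1 w * max (K - s * Real.exp (τ * w - τ^2/2)) 0 := by
  rw [integral_pos_iff_support_of_nonneg
    (fun w => mul_nonneg (gaussianPDFReal_nonneg 0 1 w) (le_max_right _ _))
    (integ_maxp_aux s K τ hs)]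
  set w₀ := (Real.log (K/s) + τ^2/2)/τ with hw₀
  have hsub : Set.Iio w₀ ⊆ Function.support
      (fun w => gaussianPDFReal 0 1 w * max (K - s * Real.exp (τ * w - τ^2/2)) 0) := by
    intro w hw
    have h1 : τ * w - τ^2/2 < Real.log (K/s) := by
      have : w < w₀ := hw
      rw [hw₀] at this
      have := (lt_div_iff₀ hτ).mp this
      nlinarith
    have h2 : Real.exp (τ * w - τ^2/2) < K/s := by
      calc Real.exp (τ * w - τ^2/2) < Real.exp (Real.log (K/s)) := Real.exp_lt_exp.mpr h1
        _ = K/s := Real.exp_log (by positivity)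
    have h3 : s * Real.exp (τ * w - τ^2/2) < K := by
      calc s * Real.exp (τ * w - τ^2/2) = Real.exp (τ * w - τ^2/2) * s := mul_comm _ _
        _ < K := (lt_div_iff₀ hs).mp h2
    have h4 : 0 < max (K - s * Real.exp (τ * w - τ^2/2)) 0 :=
      lt_max_of_lt_left (by linarith)
    have h5 : 0 < gaussianPDFReal 0 1 w := gaussianPDFReal_pos 0 1 w one_ne_zero
    exact ne_of_gt (mul_pos h5 h4)
  calc (0:ℝ≥0∞) < volume (Set.Iio w₀) := by rw [Real.volume_Iio]; exact ENNReal.zero_lt_top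
    _ ≤ _ := measure_mono hsub

lemma abs_decomp_plus (y : ℝ) : |y| = -y + 2 * max y 0 := by
  rcases le_total 0 y with h | h
  · rw [abs_of_nonneg h, max_eq_left h]; ring
  · rw [abs_of_nonpos h, max_eq_right h]; ring

lemma abs_decomp_minus (y : ℝ) : |y| = y + 2 * max (-y) 0 := by
  rcases le_total 0 y with h | h
  · rw [abs_of_nonneg h, max_eq_right (by linarith)]; ring
  · rw [abs_of_nonpos h, max_eq_left (by linarith)]; ring

/-- For a lognormal asset `S = S(s, σ, Δt)` and `a > 0`:
`E[|S − (s + a)|] > E[|S − (s − a)|]`. -/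
theorem statement_14
    (s σ Δt a : ℝ) (hs : 0 < s) (hσ : 0 < σ) (hΔt : 0 < Δt) (ha : 0 < a) :
    (∫ w, |lnPrice s σ Δt w - (s - a)| ∂(gaussianReal 0 1))
      < ∫ w, |lnPrice s σ Δt w - (s + a)| ∂(gaussianReal 0 1) := by
  set τ := σ * Real.sqrt Δt with hτ_def
  have hτ : 0 < τ := mul_pos hσ (Real.sqrt_pos.mpr hΔt)
  have hln : ∀ w, lnPrice s σ Δt w = s * Real.exp (τ * w - τ^2/2) := by
    intro w
    unfold lnPrice
    congr 1
    rw [hτ_def, mul_pow, Real.sq_sqrt hΔt.le]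
    ring
  simp only [hln]
  rw [gauss_int_aux, gauss_int_aux]
  -- abbreviations
  set E : ℝ → ℝ := fun w => s * Real.exp (τ * w - τ^2/2) with hE
  set φ : ℝ → ℝ := fun w => gaussianPDFReal 0 1 w with hφ
  have hφint : Integrable φ := integrable_gaussianPDFReal 0 1
  have hφEint : Integrable (fun w => φ w * E w) := by
    have : (fun w => φ w * E w) = fun w => s * gaussianPDFReal τ 1 w := by
      funext w; rw [hφ, hE]; simp only; rw [← pdf_shift_aux τ w]; ring
    rw [this]
    exact (integrable_gaussianPDFReal τ 1).const_mul s
  have hφ1 : ∫ w, φ w = 1 := integral_gaussianPDFReal_eq_one 0 one_ne_zero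
  have hφE : ∫ w, φ w * E w = s := mean_eq_aux s τ
  set C := ∫ w, φ w * max (E w - (s+a)) 0 with hC
  set P := ∫ w, φ w * max ((s-a) - E w) 0 with hP
  set P' := ∫ w, φ w * max (s^2/(s+a) - E w) 0 with hP'
  have hCint : Integrable (fun w => φ w * max (E w - (s+a)) 0) := integ_maxc_aux s (s+a) τ hs
  have hPint : Integrable (fun w => φ w * max ((s-a) - E w) 0) := integ_maxp_aux s (s-a) τ hs
  have hP'int : Integrable (fun w => φ w * max (s^2/(s+a) - E w) 0) :=
    integ_maxp_aux s (s^2/(s+a)) τ hs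
  -- decomposition of the two integrals
  have Iplus : (∫ w, φ w * |E w - (s + a)|) = a + 2 * C := by
    have hdec : (fun w => φ w * |E w - (s + a)|)
        = fun w => ((s+a) * φ w - φ w * E w) + 2 * (φ w * max (E w - (s+a)) 0) := by
      funext w
      rw [abs_decomp_plus (E w - (s+a))]
      ring
    have h1 : Integrable (fun w => (s+a) * φ w - φ w * E w) :=
      (hφint.const_mul (s+a)).sub hφEint
    have h2 : Integrable (fun w => 2 * (φ w * max (E w - (s+a)) 0)) := hCint.const_mul 2
    rw [hdec, integral_add h1 h2, integral_sub (hφint.const_mul (s+a)) hφEint,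
      integral_const_mul, integral_const_mul, hφ1, hφE, ← hC]
    ring
  have Iminus : (∫ w, φ w * |E w - (s - a)|) = a + 2 * P := by
    have hdec : (fun w => φ w * |E w - (s - a)|)
        = fun w => (φ w * E w - (s-a) * φ w) + 2 * (φ w * max ((s-a) - E w) 0) := by
      funext w
      rw [abs_decomp_minus (E w - (s-a)), neg_sub]
      ring
    have h1 : Integrable (fun w => φ w * E w - (s-a) * φ w) :=
      hφEint.sub (hφint.const_mul (s-a))
    have h2 : Integrable (fun w => 2 * (φ w * max ((s-a) - E w) 0)) := hPint.const_mul 2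
    rw [hdec, integral_add h1 h2, integral_sub hφEint (hφint.const_mul (s-a)),
      integral_const_mul, integral_const_mul, hφ1, hφE, ← hP]
    ring
  rw [Iplus, Iminus]
  -- it remains to show P < C
  have hCP' : C = (s+a)/s * P' := call_eq_put_aux s a τ hs ha
  have hPP' : P ≤ P' := by
    refine integral_mono hPint hP'int (fun w => ?_)
    refine mul_le_mul_of_nonneg_left (max_le_max (sub_le_sub_right ?_ _) le_rfl)
      (gaussianPDFReal_nonneg 0 1 w)
    rw [le_div_iff₀ (by positivity)]
    nlinarith
  have hP'pos : 0 < P' := put_pos_aux s (s^2/(s+a)) τ hs (by positivity) hτ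
  have hfac : (1:ℝ) < (s+a)/s := by
    rw [lt_div_iff₀ hs]; linarith
  have : P < C := by
    calc P ≤ P' := hPP'
      _ = 1 * P' := (one_mul P').symm
      _ < (s+a)/s * P' := by exact mul_lt_mul_of_pos_right hfac hP'pos
      _ = C := hCP'.symm
  linarith
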